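/- Let L be the infinite-dimensional cyclic Leibniz algebra over a field F (basis {a_n | n ≥ 1}, [a_1,a_n] = a_{n+1}, [a_m,a_k] = 0 for m > 1). The group of all automorphisms of L is isomorphic to the multiplicative group F^× of the field F; explicitly, the map sending an automorphism f to the coefficient of a_1 in f(a_1) is a group isomorphism Aut(L) → F^×. -/

import Mathlib

/-- The automorphism group of a Leibniz algebra `(L, br)`: the subgroup of linear
automorphisms preserving the bracket. -/
def leibnizAut (F : Type*) [Field F] (L : Type*) [AddCommGroup L] [Module F L]
    (br : L →ₗ[F] L →ₗ[F] L) : Subgroup (L ≃ₗ[F] L) where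
  carrier := {f : L ≃ₗ[F] L | ∀ x y : L, f (br x y) = br (f x) (f y)}
  one_mem' := by intro x y; rfl
  mul_mem' := by
    intro f g hf hg x y
    show f (g (br x y)) = br (f (g x)) (f (g y))
    rw [hg, hf]
  inv_mem' := by
    intro f hf x y
    apply f.injective
    show f (f.symm (br x y)) = _
    rw [hf, f.apply_symm_apply]
    show br x y = br (f (f.symm x)) (f (f.symm y))
    rw [f.apply_symm_apply, f.apply_symm_apply]

/-!
Under the basis `aₙ ↦ X ^ (n - 1)`, `L` becomes `F[X]` with bracket `[p, q] = p(0) • X q`.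
An automorphism `f` with `v = f(a₁)` and `α = v(0)` then satisfies `f (X q) = α • X f(q)`, hence
`f(p) = p(α X) v`. Surjectivity of `f` makes `v` a unit of `F[X]`, i.e. the constant `α`, so `f` is
determined by `α ≠ 0`; conversely every `α ≠ 0` is realised by the diagonal map `aₙ ↦ αⁿ aₙ`.
-/

open Polynomial

namespace Polynomial

variable {R : Type*}

theorem linearMap_apply_eq_comp_mul [CommSemiring R] (g : R[X] →ₗ[R] R[X]) (α : R)
    (h : ∀ q, g (X * q) = α • (X * g q)) (p : R[X]) : g p = p.comp (C α * X) * g 1 := by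
  have g_X_pow (n : ℕ) : g (X ^ n) = (C α * X) ^ n * g 1 := by
    induction n with
    | zero => simp
    | succ n ih => rw [pow_succ', h, ih, pow_succ', smul_eq_C_mul]; ring
  induction p using Polynomial.induction_on' with
  | add p q hp hq => rw [map_add, hp, hq, add_comp, add_mul]
  | monomial n a =>
    rw [← C_mul_X_pow_eq_monomial, ← smul_eq_C_mul, map_smul, g_X_pow]
    simp only [smul_eq_C_mul, mul_comp, C_comp, X_pow_comp, mul_assoc]

theorem linearEquiv_apply_eq_comp_mul_C [CommSemiring R] [NoZeroDivisors R] (g : R[X] ≃ₗ[R] R[X]) (α : R)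
    (h : ∀ q, g (X * q) = α • (X * g q)) (h1 : (g 1).coeff 0 = α) (p : R[X]) :
    g p = p.comp (C α * X) * C α := by
  have hg := linearMap_apply_eq_comp_mul (g : R[X] →ₗ[R] R[X]) α h
  simp only [LinearEquiv.coe_coe] at hg
  obtain ⟨q, hq⟩ := g.surjective 1
  have hunit : IsUnit (g 1) := IsUnit.of_mul_eq_one_right (q.comp (C α * X)) (by rw [← hg, hq])
  obtain ⟨r, -, hr⟩ := isUnit_iff.mp hunit
  rw [← hr, coeff_C_zero] at h1
  rw [hg, ← hr, h1]

end Polynomial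

section

variable {F : Type*} [Field F] {L : Type*} [AddCommGroup L] [Module F L] {br : L →ₗ[F] L →ₗ[F] L}

theorem mem_leibnizAut_of_basis {ι : Type*} (B : Module.Basis ι F L) (f : L ≃ₗ[F] L)
    (h : ∀ i j, f (br (B i) (B j)) = br (f (B i)) (f (B j))) : f ∈ leibnizAut F L br := by
  have : br.compr₂ (f : L →ₗ[F] L) = br.compl₁₂ f f := B.ext fun i => B.ext fun j => h i j
  exact LinearMap.congr_fun₂ this

namespace CyclicLeibniz

variable (B : Module.Basis ℕ+ F L)

noncomputable def toPolynomial : L ≃ₗ[F] F[X] :=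
  B.equiv (basisMonomials F) Equiv.pnatEquivNat

theorem toPolynomial_basis (n : ℕ+) : toPolynomial B (B n) = X ^ n.natPred := by
  simp [toPolynomial, Module.Basis.equiv_apply, X_pow_eq_monomial]

theorem toPolynomial_basis_one : toPolynomial B (B 1) = 1 := by
  simp [toPolynomial_basis, PNat.natPred]

theorem coeff_zero_toPolynomial (x : L) : (toPolynomial B x).coeff 0 = B.repr x 1 := by
  have : (lcoeff F 0).comp (toPolynomial B : L →ₗ[F] F[X]) = B.coord 1 := by
    refine B.ext fun n => ?_
    rcases eq_or_ne n 1 with rfl | hn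
    · simp [toPolynomial_basis_one]
    · have : 0 ≠ n.natPred := PNat.natPred_inj.not.mpr hn.symm
      simp [toPolynomial_basis, coeff_X_pow, this, hn]
  exact LinearMap.congr_fun this x

noncomputable def diagonalEquiv (u : Fˣ) : L ≃ₗ[F] L :=
  B.equiv (B.unitsSMul fun n => u ^ (n : ℕ)) (Equiv.refl _)

theorem diagonalEquiv_basis (u : Fˣ) (n : ℕ+) :
    diagonalEquiv B u (B n) = (u : F) ^ (n : ℕ) • B n := by
  simp [diagonalEquiv, Module.Basis.unitsSMul_apply, Units.smul_def]

variable {B} (hbr1 : ∀ n : ℕ+, br (B 1) (B n) = B (n + 1))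
  (hbr2 : ∀ m k : ℕ+, 1 < m → br (B m) (B k) = 0)
include hbr1 hbr2

theorem toPolynomial_bracket (x y : L) :
    toPolynomial B (br x y) = B.repr x 1 • (X * toPolynomial B y) := by
  have : br.compr₂ (toPolynomial B : L →ₗ[F] F[X]) =
      (B.coord 1).smulRight ((LinearMap.mulLeft F X).comp (toPolynomial B : L →ₗ[F] F[X])) := by
    refine B.ext fun m => B.ext fun k => ?_
    rcases eq_or_ne m 1 with rfl | hm
    · simp [hbr1, toPolynomial_basis, PNat.natPred, ← pow_succ', Nat.sub_add_cancel k.pos]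
    · simp [hbr2 m k (lt_of_le_of_ne one_le hm.symm), hm]
  exact LinearMap.congr_fun₂ this x y

theorem diagonalEquiv_mem (u : Fˣ) : diagonalEquiv B u ∈ leibnizAut F L br := by
  refine mem_leibnizAut_of_basis B _ fun m k => ?_
  rcases eq_or_ne m 1 with rfl | hm
  · simp [diagonalEquiv_basis, hbr1, smul_smul, pow_succ]
  · simp [diagonalEquiv_basis, hbr2 m k (lt_of_le_of_ne one_le hm.symm)]

theorem toPolynomial_leibnizAut_apply (f : leibnizAut F L br) (x : L) :
    toPolynomial B ((f : L ≃ₗ[F] L) x) =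
      (toPolynomial B x).comp (C (B.repr ((f : L ≃ₗ[F] L) (B 1)) 1) * X) *
        C (B.repr ((f : L ≃ₗ[F] L) (B 1)) 1) := by
  have hX (q : F[X]) : (toPolynomial B).symm (X * q) = br (B 1) ((toPolynomial B).symm q) := by
    rw [LinearEquiv.symm_apply_eq, toPolynomial_bracket hbr1 hbr2, LinearEquiv.apply_symm_apply]
    simp
  have h1 : (toPolynomial B).symm 1 = B 1 := by
    rw [LinearEquiv.symm_apply_eq, toPolynomial_basis_one]
  have := linearEquiv_apply_eq_comp_mul_C
    ((toPolynomial B).symm ≪≫ₗ (f : L ≃ₗ[F] L) ≪≫ₗ toPolynomial B)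
    (B.repr ((f : L ≃ₗ[F] L) (B 1)) 1)
    (fun q => by simp [hX, f.2 _ _, toPolynomial_bracket hbr1 hbr2])
    (by simp [h1, coeff_zero_toPolynomial]) (toPolynomial B x)
  simpa using this

theorem leibnizAut_apply_basis_one (f : leibnizAut F L br) :
    (f : L ≃ₗ[F] L) (B 1) = B.repr ((f : L ≃ₗ[F] L) (B 1)) 1 • B 1 := by
  apply (toPolynomial B).injective
  rw [toPolynomial_leibnizAut_apply hbr1 hbr2, map_smul, toPolynomial_basis_one, one_comp,
    one_mul, smul_eq_C_mul, mul_one]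

theorem repr_leibnizAut_basis_one_ne_zero (f : leibnizAut F L br) :
    B.repr ((f : L ≃ₗ[F] L) (B 1)) 1 ≠ 0 := by
  intro h
  have := leibnizAut_apply_basis_one hbr1 hbr2 f
  rw [h, zero_smul, LinearEquiv.map_eq_zero_iff] at this
  exact B.ne_zero 1 this

theorem repr_mul_leibnizAut_basis_one (f g : leibnizAut F L br) :
    B.repr (((f * g : leibnizAut F L br) : L ≃ₗ[F] L) (B 1)) 1 =
      B.repr ((f : L ≃ₗ[F] L) (B 1)) 1 * B.repr ((g : L ≃ₗ[F] L) (B 1)) 1 := by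
  rw [Subgroup.coe_mul, LinearEquiv.mul_apply, leibnizAut_apply_basis_one hbr1 hbr2 g, map_smul,
    leibnizAut_apply_basis_one hbr1 hbr2 f]
  simp [smul_smul, mul_comm]

theorem leibnizAut_ext {f g : leibnizAut F L br}
    (h : B.repr ((f : L ≃ₗ[F] L) (B 1)) 1 = B.repr ((g : L ≃ₗ[F] L) (B 1)) 1) : f = g :=
  Subtype.ext <| LinearEquiv.ext fun x => (toPolynomial B).injective <| by
    rw [toPolynomial_leibnizAut_apply hbr1 hbr2, toPolynomial_leibnizAut_apply hbr1 hbr2, h]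

noncomputable def leibnizAutToUnits : leibnizAut F L br →* Fˣ :=
  MonoidHom.mk' (fun f => Units.mk0 _ (repr_leibnizAut_basis_one_ne_zero hbr1 hbr2 f))
    fun f g => Units.ext (repr_mul_leibnizAut_basis_one hbr1 hbr2 f g)

theorem leibnizAutToUnits_bijective : Function.Bijective (leibnizAutToUnits hbr1 hbr2) := by
  refine ⟨fun f g h => leibnizAut_ext hbr1 hbr2 (congrArg Units.val h), fun u => ?_⟩
  refine ⟨⟨diagonalEquiv B u, diagonalEquiv_mem hbr1 hbr2 u⟩, Units.ext ?_⟩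
  simp [leibnizAutToUnits, diagonalEquiv_basis]

end CyclicLeibniz

end

theorem stmt15_general
    (F : Type*) [Field F] (L : Type*) [AddCommGroup L] [Module F L]
    (br : L →ₗ[F] L →ₗ[F] L) (B : Module.Basis ℕ+ F L)
    (hbr1 : ∀ n : ℕ+, br (B 1) (B n) = B (n + 1))
    (hbr2 : ∀ m k : ℕ+, 1 < m → br (B m) (B k) = 0) :
    ∃ e : leibnizAut F L br ≃* Fˣ,
      ∀ f : leibnizAut F L br, ((e f : Fˣ) : F) = B.repr ((f : L ≃ₗ[F] L) (B 1)) 1 :=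
  ⟨MulEquiv.ofBijective _ (CyclicLeibniz.leibnizAutToUnits_bijective hbr1 hbr2), fun _ => rfl⟩

/-- For the infinite dimensional cyclic Leibniz algebra with basis `{a_n | n ≥ 1}`:
the group of all automorphisms of `L` is isomorphic to the multiplicative group `Fˣ`;
explicitly, sending an automorphism `f` to the coefficient of `a₁` in `f(a₁)`
is a group isomorphism. -/
theorem stmt15
    (F : Type*) [Field F] (L : Type*) [AddCommGroup L] [Module F L]
    (br : L →ₗ[F] L →ₗ[F] L) (B : Module.Basis ℕ+ F L)
    (hleib : ∀ a b c : L, br a (br b c) = br (br a b) c + br b (br a c))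
    (hbr1 : ∀ n : ℕ+, br (B 1) (B n) = B (n + 1))
    (hbr2 : ∀ m k : ℕ+, 1 < m → br (B m) (B k) = 0) :
    ∃ e : leibnizAut F L br ≃* Fˣ,
      ∀ f : leibnizAut F L br, ((e f : Fˣ) : F) = B.repr ((f : L ≃ₗ[F] L) (B 1)) 1 :=
  stmt15_general F L br B hbr1 hbr2
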